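/- arXiv:2304.07624 — 6 statements merged into one kernel-verified Lean document; each statement's English description precedes it below -/
import Mathlib

section
/- Let X be a set of ordinals, F a construction scheme over X, k ≤ l natural numbers, E ∈ F of rank k, and F ∈ F of rank l. Then (a) E ∩ F is an initial segment of E; and (b) if k < l and E ⊆ F, then there exists i < n_l such that E ⊆ F_i, where {F_i}_{i<n_l} is the canonical decomposition of F. -/
open Set

/-- A *type* for construction schemes: a sequence `(m_k, n_{k+1}, r_{k+1})`. -/
structure CSType where
  m : ℕ → ℕ
  n : ℕ → ℕ
  r : ℕ → ℕ
  m_zero : m 0 = 1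
  n_ge : ∀ k, 1 ≤ k → 2 ≤ n k
  r_inf : ∀ j N, ∃ k, N ≤ k ∧ 1 ≤ k ∧ r k = j
  r_lt : ∀ k, r (k + 1) < m k
  m_rec : ∀ k, m (k + 1) = r (k + 1) + (m k - r (k + 1)) * n (k + 1)

/-- `C` is an initial segment of `A` (written `C ⊑ A` in the paper). -/
def InitSeg (C A : Finset Ordinal) : Prop :=
  C ⊆ A ∧ ∀ c ∈ C, ∀ d ∈ A, d ≤ c → d ∈ C

/-- `D` (with root `R`) is the canonical decomposition of `F`, an element of rank `k+1`,
into `n_{k+1}` elements of rank `k` forming a Δ-system with root `R` of size `r_{k+1}`,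
with `R < D 0 \ R < ⋯ < D (n_{k+1} - 1) \ R`. -/
def CanonDecomp (τ : CSType) (𝓕 : Set (Finset Ordinal)) (k : ℕ)
    (F : Finset Ordinal) (D : Fin (τ.n (k + 1)) → Finset Ordinal)
    (R : Finset Ordinal) : Prop :=
  (∀ i, D i ∈ 𝓕 ∧ (D i).card = τ.m k) ∧
  (∀ x, x ∈ F ↔ ∃ i, x ∈ D i) ∧
  R.card = τ.r (k + 1) ∧
  (∀ i j, i ≠ j → D i ∩ D j = R) ∧
  (∀ a ∈ R, ∀ i, ∀ b ∈ D i, b ∉ R → a < b) ∧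
  (∀ i j : Fin (τ.n (k + 1)), i < j → ∀ b ∈ D i, b ∉ R → ∀ c ∈ D j, c ∉ R → b < c)

/-- `𝓕` is a construction scheme over the set of ordinals `X` of type `τ`.
Rank is measured by cardinality: an element of rank `k` has cardinality `m_k`. -/
structure IsConstructionScheme (τ : CSType) (X : Set Ordinal)
    (𝓕 : Set (Finset Ordinal)) : Prop where
  subset_X : ∀ F ∈ 𝓕, (F : Set Ordinal) ⊆ X
  card_mem : ∀ F ∈ 𝓕, ∃ k, F.card = τ.m k
  cofinal : ∀ A : Finset Ordinal, (A : Set Ordinal) ⊆ X → ∃ F ∈ 𝓕, A ⊆ F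
  initSeg : ∀ k, ∀ E ∈ 𝓕, ∀ F ∈ 𝓕, E.card = τ.m k → F.card = τ.m k →
    InitSeg (E ∩ F) E
  decomp : ∀ k, ∀ F ∈ 𝓕, F.card = τ.m (k + 1) →
    ∃! D : Fin (τ.n (k + 1)) → Finset Ordinal, ∃ R, CanonDecomp τ 𝓕 k F D R

/-- `ρ(α,β)`: the least `k` such that some element of `𝓕` of rank `k` contains both. -/
noncomputable def csRho (τ : CSType) (𝓕 : Set (Finset Ordinal)) (α β : Ordinal) : ℕ :=
  sInf {k | ∃ F ∈ 𝓕, F.card = τ.m k ∧ α ∈ F ∧ β ∈ F}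

/-- The `k`-closure `(β)_k = {α ≤ β | ρ(α,β) ≤ k}` (within `X`). -/
def csClos (τ : CSType) (𝓕 : Set (Finset Ordinal)) (X : Set Ordinal)
    (k : ℕ) (β : Ordinal) : Set Ordinal :=
  {α ∈ X | α ≤ β ∧ csRho τ 𝓕 α β ≤ k}

/-- `Δ(α,β) = min({k | |(α)_k| ≠ |(β)_k|} ∪ {ω})`, valued in `ℕ∞` (where `⊤` plays
the role of `ω`). -/
noncomputable def csDelta (τ : CSType) (𝓕 : Set (Finset Ordinal)) (X : Set Ordinal)
    (α β : Ordinal) : ℕ∞ :=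
  sInf ((fun k : ℕ => (k : ℕ∞)) ''
    {k | (csClos τ 𝓕 X k α).ncard ≠ (csClos τ 𝓕 X k β).ncard})

/-- The function `Ξ_α : ω → ω ∪ {-1}` associated to a construction scheme. -/
noncomputable def csXi (τ : CSType) (𝓕 : Set (Finset Ordinal)) (X : Set Ordinal)
    (α : Ordinal) (k : ℕ) : ℤ :=
  if k = 0 then 0
  else if (csClos τ 𝓕 X k α).ncard ≤ τ.r k then -1
  else (((csClos τ 𝓕 X k α).ncard : ℤ) - ((csClos τ 𝓕 X (k - 1) α).ncard : ℤ)) /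
    ((τ.m (k - 1) : ℤ) - (τ.r k : ℤ))

/-- `F` (of rank `k+1`) captures the pair `{α, β}`: with canonical decomposition
`D` and root `R`, `α ∈ D 0 \ R`, `β ∈ D 1 \ R`, and the increasing bijection from
`D 0` to `D 1` sends `α` to `β`. -/
def CapturesPair (τ : CSType) (𝓕 : Set (Finset Ordinal)) (k : ℕ)
    (F : Finset Ordinal) (α β : Ordinal) : Prop :=
  F ∈ 𝓕 ∧ F.card = τ.m (k + 1) ∧
  ∃ D R, CanonDecomp τ 𝓕 k F D R ∧
    ∃ (h0 : 0 < τ.n (k + 1)) (h1 : 1 < τ.n (k + 1)),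
      α ∈ D ⟨0, h0⟩ ∧ α ∉ R ∧ β ∈ D ⟨1, h1⟩ ∧ β ∉ R ∧
      ((D ⟨0, h0⟩ : Set Ordinal) ∩ Set.Iic α).ncard =
        ((D ⟨1, h1⟩ : Set Ordinal) ∩ Set.Iic β).ncard

/-- `𝓕` is 2-capturing: for every uncountable `S ⊆ X` and every `k₀` there are a pair
`{α, β} ∈ [S]²` and `F ∈ 𝓕` of rank `l > k₀` capturing it. -/
def TwoCapturing (τ : CSType) (X : Set Ordinal) (𝓕 : Set (Finset Ordinal)) : Prop :=
  ∀ S : Set Ordinal, S ⊆ X → ¬ S.Countable → ∀ k₀ : ℕ,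
    ∃ k, k₀ ≤ k ∧ ∃ F α β, α ∈ S ∧ β ∈ S ∧ α < β ∧ CapturesPair τ 𝓕 k F α β


lemma initSeg_nested {C₁ C₂ A : Finset Ordinal} (h₁ : InitSeg C₁ A) (h₂ : InitSeg C₂ A) :
    C₁ ⊆ C₂ ∨ C₂ ⊆ C₁ := by
  by_cases h : C₁ ⊆ C₂
  · exact Or.inl h
  · right
    obtain ⟨c, hc, hcn⟩ := Finset.not_subset.mp h
    intro d hd
    have hdc : d ≤ c := by
      by_contra hlt
      exact hcn (h₂.2 d hd c (h₁.1 hc) (le_of_not_ge hlt))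
    exact h₁.2 c hc d (h₂.1 hd) hdc

lemma stmt2_aux (τ : CSType) (X : Set Ordinal) (𝓕 : Set (Finset Ordinal))
    (hCS : IsConstructionScheme τ X 𝓕) (k : ℕ)
    (E : Finset Ordinal) (hE : E ∈ 𝓕) (hEc : E.card = τ.m k) :
    ∀ l, k ≤ l → ∀ F ∈ 𝓕, F.card = τ.m l → InitSeg (E ∩ F) E := by
  refine Nat.le_induction ?_ ?_
  · intro F hF hFc
    exact hCS.initSeg k E hE F hF hEc hFc
  · intro l hkl ih F hF hFc
    obtain ⟨D, ⟨R, hD⟩, -⟩ := hCS.decomp l F hF hFc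
    constructor
    · exact Finset.inter_subset_left
    · intro c hc d hd hdc
      rw [Finset.mem_inter] at hc ⊢
      obtain ⟨hcE, hcF⟩ := hc
      obtain ⟨i, hci⟩ := (hD.2.1 c).mp hcF
      have hseg : InitSeg (E ∩ D i) E := ih (D i) (hD.1 i).1 (hD.1 i).2
      have : d ∈ E ∩ D i := hseg.2 c (Finset.mem_inter.mpr ⟨hcE, hci⟩) d hd hdc
      exact ⟨hd, (hD.2.1 d).mpr ⟨i, (Finset.mem_inter.mp this).2⟩⟩

/-- For `E ∈ 𝓕` of rank `k` and `F ∈ 𝓕` of rank `l` with `k ≤ l`: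
(a) `E ∩ F` is an initial segment of `E`; (b) if `k < l` and `E ⊆ F`, then `E` is
contained in some piece of the canonical decomposition of `F`. -/
theorem stmt2 (τ : CSType) (X : Set Ordinal) (𝓕 : Set (Finset Ordinal))
    (hCS : IsConstructionScheme τ X 𝓕) (k l : ℕ) (hkl : k ≤ l)
    (E F : Finset Ordinal) (hE : E ∈ 𝓕) (hEc : E.card = τ.m k)
    (hF : F ∈ 𝓕) (hFc : F.card = τ.m l) :
    InitSeg (E ∩ F) E ∧
    (∀ l' : ℕ, l = l' + 1 → k < l → E ⊆ F →
      ∀ (D : Fin (τ.n (l' + 1)) → Finset Ordinal) (R : Finset Ordinal),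
        CanonDecomp τ 𝓕 l' F D R → ∃ i, E ⊆ D i) := by
  constructor
  · exact stmt2_aux τ X 𝓕 hCS k E hE hEc l hkl F hF hFc
  · intro l' hl hklt hEF D R hD
    have hkl' : k ≤ l' := by omega
    have hseg : ∀ i, InitSeg (E ∩ D i) E := fun i =>
      stmt2_aux τ X 𝓕 hCS k E hE hEc l' hkl' (D i) (hD.1 i).1 (hD.1 i).2
    have hn : 0 < τ.n (l' + 1) := by have := τ.n_ge (l' + 1) (by omega); omega
    obtain ⟨i, -, hi⟩ := Finset.exists_max_image (Finset.univ : Finset (Fin (τ.n (l' + 1))))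
      (fun i => (E ∩ D i).card) ⟨⟨0, hn⟩, Finset.mem_univ _⟩
    refine ⟨i, fun x hx => ?_⟩
    obtain ⟨j, hxj⟩ := (hD.2.1 x).mp (hEF hx)
    rcases initSeg_nested (hseg j) (hseg i) with hsub | hsub
    · exact (Finset.mem_inter.mp (hsub (Finset.mem_inter.mpr ⟨hx, hxj⟩))).2
    · have := Finset.eq_of_subset_of_card_le hsub (hi j (Finset.mem_univ _))
      have hxm : x ∈ E ∩ D i := this ▸ Finset.mem_inter.mpr ⟨hx, hxj⟩
      exact (Finset.mem_inter.mp hxm).2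
end

section
/- Fix a type {(m_k, n_{k+1}, r_{k+1})}. For a finite set of ordinals X, there exists a construction scheme over X if and only if |X| = m_k for some k; moreover, when it exists, the construction scheme over X is unique. -/
open Set

/-! Everything is determined by positions. In a canonical decomposition of `F` of rank `k + 1`
the root precedes all other elements, so it consists of the first `r_{k+1}` elements of `F`, and
the `i`-th part is the root followed by the `i`-th block of `m_k - r_{k+1}` consecutive elements.
Hence a scheme over `X` with `|X| = m_k` contains these canonical parts, restricts to a scheme over
each of them, and every smaller member lies in one of them (the part containing its maximum,
by coherence); by induction on `k` the scheme is forced. Conversely this recursion does define a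
scheme: two parts with different indices meet only in the root, an initial segment, which gives
coherence. Finally `X` itself belongs to every scheme over `X`, so `|X| = m_k` is necessary. -/

open scoped Finset

namespace CSType

variable (τ : CSType) (k : ℕ)

theorem two_le_n_succ : 2 ≤ τ.n (k + 1) := τ.n_ge (k + 1) k.succ_pos

theorem m_lt_m_succ : τ.m k < τ.m (k + 1) := by
  have := Nat.mul_le_mul_left (τ.m k - τ.r (k + 1)) (τ.two_le_n_succ k)
  have := τ.m_rec k
  have := τ.r_lt k
  omega

theorem m_strictMono : StrictMono τ.m := strictMono_nat_of_lt_succ τ.m_lt_m_succ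

theorem m_pos : 0 < τ.m k :=
  lt_of_lt_of_le (by rw [τ.m_zero]; exact one_pos) (τ.m_strictMono.monotone k.zero_le)

end CSType

section Position

variable {α : Type*} [LinearOrder α] {F Y Z R : Finset α} {x y c : α}

def posIn (F : Finset α) (x : α) : ℕ := #(F.filter (· < x))

theorem posIn_lt_card (hx : x ∈ F) : posIn F x < #F :=
  Finset.card_lt_card (Finset.filter_ssubset.2 ⟨x, hx, lt_irrefl x⟩)

theorem posIn_mono (h : x ≤ y) : posIn F x ≤ posIn F y :=
  Finset.card_le_card (Finset.monotone_filter_right _ fun _ _ hz => hz.trans_le h)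

theorem posIn_lt_posIn (hx : x ∈ F) (h : x < y) : posIn F x < posIn F y := by
  refine Finset.card_lt_card ⟨Finset.monotone_filter_right _ fun _ _ hz => hz.trans h, ?_⟩
  intro hsub
  simpa using hsub (Finset.mem_filter.2 ⟨hx, h⟩)

theorem lt_of_posIn_lt_posIn (h : posIn F x < posIn F y) : x < y :=
  lt_of_not_ge fun hyx => (posIn_mono hyx).not_gt h

theorem posIn_injOn : Set.InjOn (posIn F) F := by
  intro x hx y hy hxy
  rcases lt_trichotomy x y with h | h | h
  · exact absurd hxy (posIn_lt_posIn hx h).ne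
  · exact h
  · exact absurd hxy (posIn_lt_posIn hy h).ne'

theorem image_posIn : F.image (posIn F) = Finset.range #F := by
  refine Finset.eq_of_subset_of_card_le ?_ (by rw [Finset.card_image_of_injOn posIn_injOn,
    Finset.card_range])
  intro p hp
  obtain ⟨x, hx, rfl⟩ := Finset.mem_image.1 hp
  exact Finset.mem_range.2 (posIn_lt_card hx)

theorem card_filter_posIn (p : ℕ → Prop) [DecidablePred p] :
    #(F.filter fun x => p (posIn F x)) = #((Finset.range #F).filter p) := by
  rw [← image_posIn, Finset.filter_image,
    Finset.card_image_of_injOn (posIn_injOn.mono (Finset.filter_subset _ _))]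

theorem posIn_eq_of_filter_le_eq (hYZ : Y.filter (· ≤ c) = Z.filter (· ≤ c)) (hx : x ≤ c) :
    posIn Y x = posIn Z x := by
  have h : ∀ W : Finset α, W.filter (· < x) = (W.filter (· ≤ c)).filter (· < x) := fun W => by
    rw [Finset.filter_filter]
    exact Finset.filter_congr fun y _ => ⟨fun hy => ⟨hy.le.trans hx, hy⟩, And.right⟩
  rw [posIn, posIn, h Y, h Z, hYZ]

theorem mem_of_filter_le_eq (hYZ : Y.filter (· ≤ c) = Z.filter (· ≤ c)) (hx : x ∈ Y)
    (hxc : x ≤ c) : x ∈ Z :=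
  (Finset.mem_filter.1 (hYZ ▸ Finset.mem_filter.2 ⟨hx, hxc⟩)).1

theorem mem_iff_posIn_lt_card (hRF : R ⊆ F) (hlt : ∀ a ∈ R, ∀ b ∈ F, b ∉ R → a < b)
    (hx : x ∈ F) : x ∈ R ↔ posIn F x < #R := by
  constructor
  · intro hxR
    refine lt_of_le_of_lt (Finset.card_le_card fun y hy => ?_) (Finset.card_erase_lt_of_mem hxR)
    obtain ⟨hyF, hyx⟩ := Finset.mem_filter.1 hy
    refine Finset.mem_erase.2 ⟨hyx.ne, ?_⟩
    by_contra hyR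
    exact (hlt x hxR y hyF hyR).not_gt hyx
  · intro hpos
    by_contra hxR
    refine (Finset.card_le_card fun a ha => ?_).not_gt hpos
    exact Finset.mem_filter.2 ⟨hRF ha, hlt a ha x hx hxR⟩

end Position

section Children

variable (τ : CSType) (k : ℕ)

/-- Positions below `r_{k+1}` form the root, shared by all children; the remaining positions
come in consecutive blocks of length `m_k - r_{k+1}`, the `i`-th of which goes to the `i`-th
child. -/
def IsChildPos (i p : ℕ) : Prop :=
  p < τ.r (k + 1) ∨ (p - τ.r (k + 1)) / (τ.m k - τ.r (k + 1)) = i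

instance (i : ℕ) : DecidablePred (IsChildPos τ k i) := fun _ => by
  unfold IsChildPos; infer_instance

variable {τ k}

theorem IsChildPos.eq {i i' p : ℕ} (h : IsChildPos τ k i p) (h' : IsChildPos τ k i' p)
    (hp : τ.r (k + 1) ≤ p) : i = i' := by
  rcases h with h | rfl <;> rcases h' with h' | rfl <;> omega

theorem IsChildPos.lt {i i' p p' : ℕ} (hii : i < i') (h : IsChildPos τ k i p)
    (h' : IsChildPos τ k i' p') (hp : τ.r (k + 1) ≤ p) (hp' : τ.r (k + 1) ≤ p') : p < p' := by
  rcases h with h | rfl; · omega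
  rcases h' with h' | rfl; · omega
  by_contra! hle
  exact hii.not_ge (Nat.div_le_div_right (by omega))

theorem exists_isChildPos {p : ℕ} (hp : p < τ.m (k + 1)) :
    ∃ i < τ.n (k + 1), IsChildPos τ k i p := by
  have := τ.m_rec k
  have := τ.r_lt k
  have := Nat.mul_le_mul_left (τ.m k - τ.r (k + 1)) (τ.two_le_n_succ k)
  refine ⟨(p - τ.r (k + 1)) / (τ.m k - τ.r (k + 1)), ?_, Or.inr rfl⟩
  rw [Nat.div_lt_iff_lt_mul (by omega), mul_comm]
  omega

theorem card_filter_isChildPos {i : ℕ} (hi : i < τ.n (k + 1)) :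
    #((Finset.range (τ.m (k + 1))).filter (IsChildPos τ k i)) = τ.m k := by
  have hm := τ.m_rec k
  set s := τ.m k - τ.r (k + 1)
  have hs : 0 < s := by have := τ.r_lt k; omega
  have hblock : i * s + s ≤ s * τ.n (k + 1) := by
    rw [mul_comm s, ← Nat.succ_mul]; exact Nat.mul_le_mul_right s hi
  have hsplit : (Finset.range (τ.m (k + 1))).filter (IsChildPos τ k i) =
      Finset.range (τ.r (k + 1)) ∪ Finset.Ico (τ.r (k + 1) + i * s) (τ.r (k + 1) + i * s + s) := by
    ext p
    simp only [IsChildPos, Finset.mem_filter, Finset.mem_range, Finset.mem_union, Finset.mem_Ico]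
    rw [Nat.div_eq_iff hs]
    omega
  rw [hsplit, Finset.card_union_of_disjoint (Finset.disjoint_left.2 fun p hp hp' => by
    simp only [Finset.mem_range, Finset.mem_Ico] at hp hp'; omega), Finset.card_range,
    Nat.card_Ico]
  have := τ.r_lt k
  omega

variable {α : Type*} [LinearOrder α] (τ k)

def child (F : Finset α) (i : ℕ) : Finset α :=
  F.filter fun x => IsChildPos τ k i (posIn F x)

def root (F : Finset α) : Finset α :=
  F.filter fun x => posIn F x < τ.r (k + 1)

variable {τ k} {F Y Z : Finset α} {i i' : ℕ} {a b c x : α}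

theorem mem_child : x ∈ child τ k F i ↔ x ∈ F ∧ IsChildPos τ k i (posIn F x) :=
  Finset.mem_filter

theorem mem_root : x ∈ root τ k F ↔ x ∈ F ∧ posIn F x < τ.r (k + 1) :=
  Finset.mem_filter

theorem child_subset : child τ k F i ⊆ F := Finset.filter_subset _ _

theorem root_subset_child : root τ k F ⊆ child τ k F i := fun _ hx =>
  mem_child.2 ⟨(mem_root.1 hx).1, Or.inl (mem_root.1 hx).2⟩

theorem card_child (hF : #F = τ.m (k + 1)) (hi : i < τ.n (k + 1)) :
    #(child τ k F i) = τ.m k := by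
  rw [child, card_filter_posIn, hF, card_filter_isChildPos hi]

theorem card_root (hF : #F = τ.m (k + 1)) : #(root τ k F) = τ.r (k + 1) := by
  have hr := (τ.r_lt k).trans (τ.m_lt_m_succ k)
  have hrange :
      (Finset.range (τ.m (k + 1))).filter (· < τ.r (k + 1)) = Finset.range (τ.r (k + 1)) := by
    ext p; simp only [Finset.mem_filter, Finset.mem_range]; omega
  rw [root, card_filter_posIn (· < τ.r (k + 1)), hF, hrange, Finset.card_range]

theorem child_inter_child (hne : i ≠ i') : child τ k F i ∩ child τ k F i' = root τ k F := by
  ext x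
  simp only [Finset.mem_inter, mem_child, mem_root]
  constructor
  · rintro ⟨⟨hxF, h⟩, -, h'⟩
    exact ⟨hxF, not_le.1 fun hp => hne (h.eq h' hp)⟩
  · rintro ⟨hxF, h⟩
    exact ⟨⟨hxF, Or.inl h⟩, hxF, Or.inl h⟩

theorem exists_mem_child (hF : #F = τ.m (k + 1)) (hx : x ∈ F) :
    ∃ i < τ.n (k + 1), x ∈ child τ k F i := by
  obtain ⟨i, hi, h⟩ := exists_isChildPos (hF ▸ posIn_lt_card hx)
  exact ⟨i, hi, mem_child.2 ⟨hx, h⟩⟩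

theorem notMem_root_iff (hx : x ∈ F) : x ∉ root τ k F ↔ τ.r (k + 1) ≤ posIn F x := by
  simp [mem_root, hx]

theorem lt_of_mem_root (ha : a ∈ root τ k F) (hb : b ∈ F) (hbR : b ∉ root τ k F) : a < b :=
  lt_of_posIn_lt_posIn ((mem_root.1 ha).2.trans_le ((notMem_root_iff hb).1 hbR))

theorem child_lt_child (hii : i < i') (hb : b ∈ child τ k F i) (hbR : b ∉ root τ k F)
    (hc : c ∈ child τ k F i') (hcR : c ∉ root τ k F) : b < c := by
  rw [mem_child] at hb hc
  exact lt_of_posIn_lt_posIn (hb.2.lt hii hc.2 ((notMem_root_iff hb.1).1 hbR)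
    ((notMem_root_iff hc.1).1 hcR))

/-- For different indices `i ≠ i'`, the point `c` must lie in the root, and up to a root
element every child coincides with the whole set. -/
theorem filter_le_child_eq (hYZ : Y.filter (· ≤ c) = Z.filter (· ≤ c))
    (hcY : c ∈ child τ k Y i) (hcZ : c ∈ child τ k Z i') :
    (child τ k Y i).filter (· ≤ c) = (child τ k Z i').filter (· ≤ c) := by
  have hpos : ∀ {x}, x ≤ c → posIn Y x = posIn Z x := posIn_eq_of_filter_le_eq hYZ
  have hidx : ∀ p ≤ posIn Y c, (IsChildPos τ k i p ↔ IsChildPos τ k i' p) := by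
    rcases eq_or_ne i i' with rfl | hne
    · exact fun _ _ => Iff.rfl
    have hcR : posIn Y c < τ.r (k + 1) := not_le.1 fun hr =>
      hne ((mem_child.1 hcY).2.eq (hpos le_rfl ▸ (mem_child.1 hcZ).2) hr)
    exact fun p hp => ⟨fun _ => Or.inl (hp.trans_lt hcR), fun _ => Or.inl (hp.trans_lt hcR)⟩
  ext x
  simp only [Finset.mem_filter, mem_child]
  constructor
  · rintro ⟨⟨hxY, h⟩, hxc⟩
    exact ⟨⟨mem_of_filter_le_eq hYZ hxY hxc, hpos hxc ▸ (hidx _ (posIn_mono hxc)).1 h⟩, hxc⟩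
  · rintro ⟨⟨hxZ, h⟩, hxc⟩
    exact ⟨⟨mem_of_filter_le_eq hYZ.symm hxZ hxc, (hidx _ (posIn_mono hxc)).2 (hpos hxc ▸ h)⟩, hxc⟩

end Children

section Canon

variable {α : Type*} [LinearOrder α]

def canon (τ : CSType) : ℕ → Finset α → Set (Finset α)
  | 0, Y => {Y}
  | k + 1, Y => {Y} ∪ ⋃ i ∈ Finset.range (τ.n (k + 1)), canon τ k (child τ k Y i)

variable {τ : CSType} {k l : ℕ} {Y Z E F : Finset α}

theorem mem_canon_zero : F ∈ canon τ 0 Y ↔ F = Y := Iff.rfl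

theorem mem_canon_succ :
    F ∈ canon τ (k + 1) Y ↔ F = Y ∨ ∃ i < τ.n (k + 1), F ∈ canon τ k (child τ k Y i) := by
  simp [canon]

theorem self_mem_canon : Y ∈ canon τ k Y := by
  cases k with
  | zero => exact rfl
  | succ k => exact mem_canon_succ.2 (Or.inl rfl)

theorem subset_of_mem_canon (hF : F ∈ canon τ k Y) : F ⊆ Y := by
  induction k generalizing Y with
  | zero => exact (mem_canon_zero.1 hF).subset
  | succ k ih =>
    obtain rfl | ⟨i, -, hF⟩ := mem_canon_succ.1 hF
    · exact subset_rfl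
    · exact (ih hF).trans child_subset

theorem card_of_mem_canon (hY : #Y = τ.m k) (hF : F ∈ canon τ k Y) : ∃ j ≤ k, #F = τ.m j := by
  induction k generalizing Y with
  | zero => exact ⟨0, le_rfl, mem_canon_zero.1 hF ▸ hY⟩
  | succ k ih =>
    obtain rfl | ⟨i, hi, hF⟩ := mem_canon_succ.1 hF
    · exact ⟨k + 1, le_rfl, hY⟩
    · obtain ⟨j, hj, hFj⟩ := ih (card_child hY hi) hF
      exact ⟨j, hj.trans k.le_succ, hFj⟩

theorem card_lt_of_mem_canon_child (hY : #Y = τ.m (k + 1)) {i : ℕ} (hi : i < τ.n (k + 1))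
    (hF : F ∈ canon τ k (child τ k Y i)) : #F < #Y := by
  refine (Finset.card_le_card (subset_of_mem_canon hF)).trans_lt ?_
  rw [card_child hY hi, hY]
  exact τ.m_lt_m_succ k

theorem exists_mem_canon_card_eq (hY : #Y = τ.m k) {j : ℕ} (hj : j ≤ k) {b : α} (hb : b ∈ Y) :
    ∃ E ∈ canon τ k Y, #E = τ.m j ∧ b ∈ E := by
  induction k generalizing Y with
  | zero => exact ⟨Y, self_mem_canon, Nat.le_zero.1 hj ▸ hY, hb⟩
  | succ k ih =>
    rcases hj.eq_or_lt with rfl | hj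
    · exact ⟨Y, self_mem_canon, hY, hb⟩
    obtain ⟨i, hi, hbi⟩ := exists_mem_child hY hb
    obtain ⟨E, hE, hEj, hbE⟩ := ih (card_child hY hi) (Nat.lt_succ_iff.1 hj) hbi
    exact ⟨E, mem_canon_succ.2 (Or.inr ⟨i, hi, hE⟩), hEj, hbE⟩

theorem canon_subset_canon (hY : #Y = τ.m k) (hF : F ∈ canon τ k Y) (hFl : #F = τ.m l) :
    canon τ l F ⊆ canon τ k Y := by
  induction k generalizing Y with
  | zero =>
    obtain rfl := mem_canon_zero.1 hF
    obtain rfl := τ.m_strictMono.injective (hFl.symm.trans hY)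
    exact subset_rfl
  | succ k ih =>
    obtain rfl | ⟨i, hi, hF⟩ := mem_canon_succ.1 hF
    · obtain rfl := τ.m_strictMono.injective (hFl.symm.trans hY)
      exact subset_rfl
    · exact fun G hG => mem_canon_succ.2 (Or.inr ⟨i, hi, ih (card_child hY hi) hF hG⟩)

/-- Coherence of canonical schemes, stated for two base sets that agree up to `c` so that the
induction can pass to children with different indices. -/
theorem mem_of_mem_canon_of_filter_le_eq (hY : #Y = τ.m k) (hZ : #Z = τ.m k)
    (hE : E ∈ canon τ k Y) (hF : F ∈ canon τ k Z) (hEF : #E = #F) {c d : α}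
    (hcE : c ∈ E) (hcF : c ∈ F) (hYZ : Y.filter (· ≤ c) = Z.filter (· ≤ c))
    (hdE : d ∈ E) (hdc : d ≤ c) : d ∈ F := by
  induction k generalizing Y Z E F with
  | zero =>
    rw [mem_canon_zero] at hE hF
    subst hE hF
    exact mem_of_filter_le_eq hYZ hdE hdc
  | succ k ih =>
    obtain rfl | ⟨i, hi, hE⟩ := mem_canon_succ.1 hE <;>
      obtain rfl | ⟨i', hi', hF⟩ := mem_canon_succ.1 hF
    · exact mem_of_filter_le_eq hYZ hdE hdc
    · have := card_lt_of_mem_canon_child hZ hi' hF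
      omega
    · have := card_lt_of_mem_canon_child hY hi hE
      omega
    · exact ih (card_child hY hi) (card_child hZ hi') hE hF hEF hcE hcF
        (filter_le_child_eq hYZ (subset_of_mem_canon hE hcE) (subset_of_mem_canon hF hcF)) hdE

end Canon

namespace CanonDecomp

variable {τ : CSType} {𝓕 : Set (Finset Ordinal)} {k : ℕ} {F R : Finset Ordinal}
  {D : Fin (τ.n (k + 1)) → Finset Ordinal}

theorem subset (h : CanonDecomp τ 𝓕 k F D R) (i : Fin (τ.n (k + 1))) : D i ⊆ F :=
  fun x hx => (h.2.1 x).2 ⟨i, hx⟩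

theorem root_subset (h : CanonDecomp τ 𝓕 k F D R) (i : Fin (τ.n (k + 1))) : R ⊆ D i := by
  obtain ⟨-, -, -, hinter, -⟩ := h
  have : Nontrivial (Fin (τ.n (k + 1))) := Fin.nontrivial_iff_two_le.2 (τ.two_le_n_succ k)
  obtain ⟨j, hj⟩ := exists_ne i
  rw [← hinter i j hj.symm]
  exact Finset.inter_subset_left

theorem eq_root (h : CanonDecomp τ 𝓕 k F D R) : R = root τ k F := by
  have hRF : R ⊆ F :=
    (h.root_subset ⟨0, by have := τ.two_le_n_succ k; omega⟩).trans (h.subset _)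
  obtain ⟨-, hcov, hR, -, hroot, -⟩ := h
  have hlt : ∀ a ∈ R, ∀ b ∈ F, b ∉ R → a < b := fun a ha b hb hbR => by
    obtain ⟨i, hbi⟩ := (hcov b).1 hb
    exact hroot a ha i b hbi hbR
  ext x
  rw [mem_root, ← hR]
  exact ⟨fun hx => ⟨hRF hx, (mem_iff_posIn_lt_card hRF hlt (hRF hx)).1 hx⟩,
    fun hx => (mem_iff_posIn_lt_card hRF hlt hx.1).2 hx.2⟩

theorem card_sdiff_root (h : CanonDecomp τ 𝓕 k F D R) (i : Fin (τ.n (k + 1))) :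
    #(D i \ R) = τ.m k - τ.r (k + 1) := by
  rw [Finset.card_sdiff_of_subset (h.root_subset i), (h.1 i).2, h.2.2.1]

theorem filter_lt_eq (h : CanonDecomp τ 𝓕 k F D R) (i : Fin (τ.n (k + 1))) {x : Ordinal}
    (hx : x ∈ D i) (hxR : x ∉ R) : F.filter (· < x) =
      R ∪ ((Finset.Iio i).biUnion (fun j => D j \ R) ∪ (D i \ R).filter (· < x)) := by
  have hDF := h.subset
  have hRD := h.root_subset i
  obtain ⟨-, hcov, -, -, hroot, hblocks⟩ := h
  ext y
  simp only [Finset.mem_filter, Finset.mem_union, Finset.mem_biUnion, Finset.mem_Iio,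
    Finset.mem_sdiff]
  constructor
  · rintro ⟨hyF, hyx⟩
    by_cases hyR : y ∈ R
    · exact Or.inl hyR
    obtain ⟨j, hyj⟩ := (hcov y).1 hyF
    rcases lt_trichotomy j i with hji | rfl | hij
    · exact Or.inr (Or.inl ⟨j, hji, hyj, hyR⟩)
    · exact Or.inr (Or.inr ⟨⟨hyj, hyR⟩, hyx⟩)
    · exact absurd (hblocks i j hij x hx hxR y hyj hyR) hyx.not_gt
  · rintro (hyR | ⟨j, hji, hyj, hyR⟩ | ⟨⟨hyi, -⟩, hyx⟩)
    · exact ⟨hDF i (hRD hyR), hroot y hyR i x hx hxR⟩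
    · exact ⟨hDF j hyj, hblocks j i hji y hyj hyR x hx hxR⟩
    · exact ⟨hDF i hyi, hyx⟩

theorem posIn_eq (h : CanonDecomp τ 𝓕 k F D R) (i : Fin (τ.n (k + 1))) {x : Ordinal}
    (hx : x ∈ D i) (hxR : x ∉ R) :
    posIn F x = τ.r (k + 1) + i * (τ.m k - τ.r (k + 1)) + posIn (D i \ R) x := by
  have hcard : ∀ j, #(D j \ R) = τ.m k - τ.r (k + 1) := h.card_sdiff_root
  have hsplit := h.filter_lt_eq i hx hxR
  obtain ⟨-, -, hR, hinter, -⟩ := h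
  have hdisj : ∀ j j', j ≠ j' → Disjoint (D j \ R) (D j' \ R) := fun j j' hne =>
    Finset.disjoint_left.2 fun y hy hy' => (Finset.mem_sdiff.1 hy).2 (hinter j j' hne ▸
      Finset.mem_inter.2 ⟨(Finset.mem_sdiff.1 hy).1, (Finset.mem_sdiff.1 hy').1⟩)
  have hcardB : #((Finset.Iio i).biUnion (fun j => D j \ R)) = i * (τ.m k - τ.r (k + 1)) := by
    rw [Finset.card_biUnion fun j _ j' _ hne => hdisj j j' hne,
      Finset.sum_congr rfl fun j _ => hcard j,
      Finset.sum_const, Fin.card_Iio, smul_eq_mul]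
  rw [posIn, hsplit, Finset.card_union_of_disjoint, Finset.card_union_of_disjoint, hR, hcardB,
    posIn, add_assoc]
  · exact Finset.disjoint_left.2 fun y hyB hyC => by
      obtain ⟨j, hji, hyj⟩ := Finset.mem_biUnion.1 hyB
      exact Finset.disjoint_left.1 (hdisj j i (Finset.mem_Iio.1 hji).ne) hyj
        (Finset.mem_filter.1 hyC).1
  · refine Finset.disjoint_left.2 fun y hyR hy => ?_
    simp only [Finset.mem_union, Finset.mem_biUnion, Finset.mem_filter, Finset.mem_sdiff] at hy
    rcases hy with ⟨-, -, -, hy⟩ | ⟨⟨-, hy⟩, -⟩ <;> exact hy hyR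

theorem eq_child (h : CanonDecomp τ 𝓕 k F D R) (hF : #F = τ.m (k + 1)) (i : Fin (τ.n (k + 1))) :
    D i = child τ k F i := by
  refine Finset.eq_of_subset_of_card_le (fun x hx => mem_child.2 ⟨h.subset i hx, ?_⟩)
    (by rw [card_child hF i.isLt, (h.1 i).2])
  by_cases hxR : x ∈ R
  · exact Or.inl (mem_root.1 (h.eq_root ▸ hxR)).2
  · have hs : 0 < τ.m k - τ.r (k + 1) := Nat.sub_pos_of_lt (τ.r_lt k)
    have hlt : posIn (D i \ R) x < τ.m k - τ.r (k + 1) :=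
      h.card_sdiff_root i ▸ posIn_lt_card (Finset.mem_sdiff.2 ⟨hx, hxR⟩)
    right
    rw [h.posIn_eq i hx hxR, add_assoc, Nat.add_sub_cancel_left, mul_comm, Nat.mul_add_div hs,
      Nat.div_eq_of_lt hlt, add_zero]

end CanonDecomp

theorem canonDecomp_child {τ : CSType} {𝓕 : Set (Finset Ordinal)} {k : ℕ} {F : Finset Ordinal}
    (hF : #F = τ.m (k + 1)) (hchild : ∀ i : Fin (τ.n (k + 1)), child τ k F i ∈ 𝓕) :
    CanonDecomp τ 𝓕 k F (fun i => child τ k F i) (root τ k F) :=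
  ⟨fun i => ⟨hchild i, card_child hF i.isLt⟩,
    fun _ => ⟨fun hx => let ⟨i, hi, hxi⟩ := exists_mem_child hF hx; ⟨⟨i, hi⟩, hxi⟩,
      fun ⟨_, hxi⟩ => child_subset hxi⟩,
    card_root hF,
    fun _ _ hne => child_inter_child (Fin.val_injective.ne hne),
    fun _ ha _ _ hb hbR => lt_of_mem_root ha (child_subset hb) hbR,
    fun _ _ hij _ hb hbR _ hc hcR => child_lt_child hij hb hbR hc hcR⟩

theorem isConstructionScheme_canon {τ : CSType} {k : ℕ} {X : Finset Ordinal} (hX : #X = τ.m k) :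
    IsConstructionScheme τ X (canon τ k X) where
  subset_X _ hF := Finset.coe_subset.2 (subset_of_mem_canon hF)
  card_mem _ hF := let ⟨j, _, hj⟩ := card_of_mem_canon hX hF; ⟨j, hj⟩
  cofinal _ hA := ⟨X, self_mem_canon, Finset.coe_subset.1 hA⟩
  initSeg _ _ hE _ hF hEj hFj := ⟨Finset.inter_subset_left, fun c hc d hd hdc =>
    Finset.mem_inter.2 ⟨hd, mem_of_mem_canon_of_filter_le_eq hX hX hE hF (hEj.trans hFj.symm)
      (Finset.mem_inter.1 hc).1 (Finset.mem_inter.1 hc).2 rfl hd hdc⟩⟩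
  decomp j F hF hFj := by
    have hchild : ∀ i : Fin (τ.n (j + 1)), child τ j F i ∈ canon τ k X := fun i =>
      canon_subset_canon hX hF hFj (mem_canon_succ.2 (Or.inr ⟨i, i.isLt, self_mem_canon⟩))
    exact ⟨_, ⟨_, canonDecomp_child hFj hchild⟩, fun D ⟨_, hD⟩ => funext (hD.eq_child hFj)⟩

namespace IsConstructionScheme

variable {τ : CSType} {𝓕 : Set (Finset Ordinal)} {k : ℕ}

theorem self_mem {X : Finset Ordinal} (h : IsConstructionScheme τ X 𝓕) : X ∈ 𝓕 := by
  obtain ⟨F, hF, hXF⟩ := h.cofinal X subset_rfl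
  rwa [(Finset.coe_subset.1 (h.subset_X F hF)).antisymm hXF] at hF

theorem restrict {X : Set Ordinal} (h : IsConstructionScheme τ X 𝓕) {Z : Finset Ordinal}
    (hZ : Z ∈ 𝓕) : IsConstructionScheme τ Z {G | G ∈ 𝓕 ∧ G ⊆ Z} where
  subset_X _ hF := Finset.coe_subset.2 hF.2
  card_mem F hF := h.card_mem F hF.1
  cofinal _ hA := ⟨Z, ⟨hZ, subset_rfl⟩, Finset.coe_subset.1 hA⟩
  initSeg j E hE F hF := h.initSeg j E hE.1 F hF.1
  decomp j F hF hFj := by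
    obtain ⟨D, ⟨R, hD⟩, huniq⟩ := h.decomp j F hF.1 hFj
    have hmem : ∀ {D' R'},
        CanonDecomp τ {G | G ∈ 𝓕 ∧ G ⊆ Z} j F D' R' ↔ CanonDecomp τ 𝓕 j F D' R' :=
      and_congr_left fun hcov => forall_congr' fun i => and_congr_left fun _ =>
        ⟨And.left, fun hi => ⟨hi, fun x hx => hF.2 ((hcov.1 x).2 ⟨i, hx⟩)⟩⟩
    exact ⟨D, ⟨R, hmem.2 hD⟩, fun D' ⟨R', hD'⟩ => huniq D' ⟨R', hmem.1 hD'⟩⟩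

theorem child_mem {X : Set Ordinal} (h : IsConstructionScheme τ X 𝓕) {F : Finset Ordinal}
    (hF : F ∈ 𝓕) (hFk : #F = τ.m (k + 1)) {i : ℕ} (hi : i < τ.n (k + 1)) : child τ k F i ∈ 𝓕 := by
  obtain ⟨D, ⟨R, hD⟩, -⟩ := h.decomp k F hF hFk
  exact hD.eq_child hFk ⟨i, hi⟩ ▸ (hD.1 ⟨i, hi⟩).1

theorem subset_of_max'_mem {X : Set Ordinal} (h : IsConstructionScheme τ X 𝓕)
    {E F : Finset Ordinal} (hE : E ∈ 𝓕) (hF : F ∈ 𝓕) (hEk : #E = τ.m k) (hFk : #F = τ.m k)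
    (hne : F.Nonempty) (hmax : F.max' hne ∈ E) : F ⊆ E := fun x hx =>
  (Finset.mem_inter.1 ((h.initSeg k F hF E hE hFk hEk).2 _
    (Finset.mem_inter.2 ⟨F.max'_mem hne, hmax⟩) x hx (F.le_max' x hx))).2

theorem eq_canon {X : Finset Ordinal} (h : IsConstructionScheme τ X 𝓕) (hX : #X = τ.m k) :
    𝓕 = canon τ k X := by
  induction k generalizing X 𝓕 with
  | zero =>
    ext F
    refine ⟨fun hF => ?_, fun hF => mem_canon_zero.1 hF ▸ h.self_mem⟩
    obtain ⟨j, hj⟩ := h.card_mem F hF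
    exact Finset.eq_of_subset_of_card_le (Finset.coe_subset.1 (h.subset_X F hF))
      (by rw [hX, hj, τ.m_zero]; exact τ.m_pos j)
  | succ k ih =>
    have hres : ∀ i < τ.n (k + 1),
        {G | G ∈ 𝓕 ∧ G ⊆ child τ k X i} = canon τ k (child τ k X i) := fun i hi =>
      ih (h.restrict (h.child_mem h.self_mem hX hi)) (card_child hX hi)
    ext F
    rw [mem_canon_succ]
    refine ⟨fun hF => ?_, ?_⟩
    · obtain ⟨j, hj⟩ := h.card_mem F hF
      have hFX : F ⊆ X := Finset.coe_subset.1 (h.subset_X F hF)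
      rcases (τ.m_strictMono.le_iff_le.1 (hj ▸ hX ▸ Finset.card_le_card hFX)).eq_or_lt
        with rfl | hjk
      · exact Or.inl (Finset.eq_of_subset_of_card_le hFX (hX.trans hj.symm).le)
      have hne : F.Nonempty := Finset.card_pos.1 (hj ▸ τ.m_pos j)
      obtain ⟨i, hi, hmax⟩ := exists_mem_child hX (hFX (F.max'_mem hne))
      obtain ⟨E, hE, hEj, hmaxE⟩ :=
        exists_mem_canon_card_eq (card_child hX hi) (Nat.lt_succ_iff.1 hjk) hmax
      rw [← hres i hi] at hE
      refine Or.inr ⟨i, hi, hres i hi ▸ ?_⟩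
      exact ⟨hF, (h.subset_of_max'_mem hE.1 hF hEj hj hne hmaxE).trans hE.2⟩
    · rintro (rfl | ⟨i, hi, hF⟩)
      · exact h.self_mem
      · rw [← hres i hi] at hF
        exact hF.1

end IsConstructionScheme

/-- For a finite set of ordinals `X`, there is a construction scheme
over `X` iff `|X| = m_k` for some `k`; moreover it is unique when it exists. -/
theorem stmt4 (τ : CSType) (X : Finset Ordinal) :
    ((∃ 𝓕, IsConstructionScheme τ (X : Set Ordinal) 𝓕) ↔ ∃ k, X.card = τ.m k) ∧
    (∀ 𝓕 𝓖, IsConstructionScheme τ (X : Set Ordinal) 𝓕 →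
      IsConstructionScheme τ (X : Set Ordinal) 𝓖 → 𝓕 = 𝓖) := by
  refine ⟨⟨fun ⟨𝓕, h⟩ => h.card_mem X h.self_mem,
    fun ⟨k, hk⟩ => ⟨canon τ k X, isConstructionScheme_canon hk⟩⟩, fun 𝓕 𝓖 h𝓕 h𝓖 => ?_⟩
  obtain ⟨k, hk⟩ := h𝓕.card_mem X h𝓕.self_mem
  rw [h𝓕.eq_canon hk, h𝓖.eq_canon hk]
end

section
/- Let F be a construction scheme over a set of ordinals X, and define ρ : X² → ω by ρ(α,β) = min{k | there exists F ∈ F of rank k with {α,β} ⊆ F}. Then ρ satisfies: ρ(α,β) = 0 iff α = β; ρ is symmetric; and if α < β and α < γ then ρ(α,β) ≤ max(ρ(α,γ), ρ(β,γ)). -/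
open Set

private lemma csm_lt (τ : CSType) (k : ℕ) : τ.m k < τ.m (k + 1) := by
  have hr := τ.r_lt k
  have hn := τ.n_ge (k + 1) (by omega)
  have hrec := τ.m_rec k
  have h2 : (τ.m k - τ.r (k + 1)) * 2 ≤ (τ.m k - τ.r (k + 1)) * τ.n (k + 1) :=
    Nat.mul_le_mul_left _ hn
  omega

private lemma csm_mono (τ : CSType) : StrictMono τ.m :=
  strictMono_nat_of_lt_succ (csm_lt τ)

/-- Descend to a point: any point of an element of rank `l` lies in a sub-element of
any rank `j ≤ l`. -/
private lemma descend_pt (τ : CSType) (X : Set Ordinal) (𝓕 : Set (Finset Ordinal))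
    (hCS : IsConstructionScheme τ X 𝓕) :
    ∀ l : ℕ, ∀ G ∈ 𝓕, G.card = τ.m l → ∀ x ∈ G, ∀ j ≤ l,
      ∃ H ∈ 𝓕, H.card = τ.m j ∧ x ∈ H ∧ H ⊆ G := by
  intro l
  induction l with
  | zero =>
    intro G hG hc x hx j hj
    interval_cases j
    exact ⟨G, hG, hc, hx, subset_rfl⟩
  | succ l ih =>
    intro G hG hc x hx j hj
    rcases eq_or_lt_of_le hj with h | h
    · exact ⟨G, hG, h ▸ hc, hx, subset_rfl⟩
    · obtain ⟨D, ⟨R, hD⟩, -⟩ := hCS.decomp l G hG hc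
      obtain ⟨i, hxi⟩ := (hD.2.1 x).1 hx
      obtain ⟨H, hH, hHc, hxH, hHs⟩ :=
        ih (D i) (hD.1 i).1 (hD.1 i).2 x hxi j (by omega)
      exact ⟨H, hH, hHc, hxH, hHs.trans (fun y hy => (hD.2.1 y).2 ⟨i, hy⟩)⟩

/-- Descend a subset: if `E ∈ 𝓕` has rank `e`, `E ⊆ G ∈ 𝓕` of rank `l`, and
`e ≤ j ≤ l`, then there is `H ∈ 𝓕` of rank `j` with `E ⊆ H ⊆ G`. -/
private lemma descend_set (τ : CSType) (X : Set Ordinal) (𝓕 : Set (Finset Ordinal))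
    (hCS : IsConstructionScheme τ X 𝓕) :
    ∀ l : ℕ, ∀ G ∈ 𝓕, G.card = τ.m l → ∀ e : ℕ, ∀ E ∈ 𝓕, E.card = τ.m e → E ⊆ G →
      ∀ j, e ≤ j → j ≤ l → ∃ H ∈ 𝓕, H.card = τ.m j ∧ E ⊆ H ∧ H ⊆ G := by
  intro l
  induction l with
  | zero =>
    intro G hG hc e E hE hEc hEG j hej hjl
    interval_cases j
    exact ⟨G, hG, hc, hEG, subset_rfl⟩
  | succ l ih =>
    intro G hG hc e E hE hEc hEG j hej hjl
    rcases eq_or_lt_of_le hjl with h | h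
    · exact ⟨G, hG, h ▸ hc, hEG, subset_rfl⟩
    · have hjl' : j ≤ l := by omega
      have hel : e ≤ l := le_trans hej hjl'
      obtain ⟨D, ⟨R, hD⟩, -⟩ := hCS.decomp l G hG hc
      have hn2 : 2 ≤ τ.n (l + 1) := τ.n_ge (l + 1) (by omega)
      obtain ⟨hDmem, hDun, hRcard, hDint, hRlt, hDlt⟩ := hD
      have hDsub : ∀ i, D i ⊆ G := fun i y hy => (hDun y).2 ⟨i, hy⟩
      have hRsub : ∀ i, R ⊆ D i := by
        intro i
        obtain ⟨j, hji⟩ : ∃ j : Fin (τ.n (l + 1)), i ≠ j := by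
          rcases eq_or_ne i ⟨0, by omega⟩ with h | h
          · exact ⟨⟨1, by omega⟩, by rw [h]; simp [Fin.ext_iff]⟩
          · exact ⟨⟨0, by omega⟩, h⟩
        rw [← hDint i j hji]
        exact Finset.inter_subset_left
      -- key: no two elements of E lie in different pieces off the root
      have hkey : ∀ a b : Fin (τ.n (l + 1)), a < b → ∀ z ∈ E, z ∈ D a → z ∉ R →
          ∀ w ∈ E, w ∈ D b → w ∉ R → False := by
        intro a b hab z hzE hza hzR w hwE hwb hwR
        have hzw : z < w := hDlt a b hab z hza hzR w hwb hwR
        obtain ⟨Ew, hEw, hEwc, hwEw, hEwsub⟩ :=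
          descend_pt τ X 𝓕 hCS l (D b) (hDmem b).1 (hDmem b).2 w hwb e hel
        have hinit := hCS.initSeg e E hE Ew hEw hEc hEwc
        have hz : z ∈ E ∩ Ew :=
          hinit.2 w (Finset.mem_inter.mpr ⟨hwE, hwEw⟩) z hzE (le_of_lt hzw)
        have hzb : z ∈ D b := hEwsub (Finset.mem_inter.mp hz).2
        have : z ∈ R := by
          rw [← hDint a b (Fin.ne_of_lt hab)]
          exact Finset.mem_inter.mpr ⟨hza, hzb⟩
        exact hzR this
      have hpiece : ∃ i, E ⊆ D i := by
        by_cases hER : ∀ x ∈ E, x ∈ R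
        · exact ⟨⟨0, by omega⟩, fun x hx => hRsub _ (hER x hx)⟩
        · push_neg at hER
          obtain ⟨x, hxE, hxR⟩ := hER
          obtain ⟨i, hxi⟩ := (hDun x).1 (hEG hxE)
          refine ⟨i, fun y hy => ?_⟩
          by_cases hyR : y ∈ R
          · exact hRsub i hyR
          · obtain ⟨a, hya⟩ := (hDun y).1 (hEG hy)
            rcases lt_trichotomy a i with hlt | rfl | hlt
            · exact absurd (hkey a i hlt y hy hya hyR x hxE hxi hxR) (fun h => h)
            · exact hya
            · exact absurd (hkey i a hlt x hxE hxi hxR y hy hya hyR) (fun h => h)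
      obtain ⟨i, hEDi⟩ := hpiece
      obtain ⟨H, hH, hHc, hEH, hHs⟩ :=
        ih (D i) (hDmem i).1 (hDmem i).2 e E hE hEc hEDi j hej hjl'
      exact ⟨H, hH, hHc, hEH, hHs.trans (hDsub i)⟩

private lemma csRho_set_nonempty (τ : CSType) (X : Set Ordinal)
    (𝓕 : Set (Finset Ordinal)) (hCS : IsConstructionScheme τ X 𝓕)
    {α β : Ordinal} (hα : α ∈ X) (hβ : β ∈ X) :
    {k | ∃ F ∈ 𝓕, F.card = τ.m k ∧ α ∈ F ∧ β ∈ F}.Nonempty := by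
  obtain ⟨F, hF, hsub⟩ := hCS.cofinal {α, β} (by
    intro x hx
    simp only [Finset.coe_insert, Finset.coe_singleton, Set.mem_insert_iff,
      Set.mem_singleton_iff] at hx
    rcases hx with rfl | rfl <;> assumption)
  obtain ⟨k, hk⟩ := hCS.card_mem F hF
  exact ⟨k, F, hF, hk, hsub (by simp), hsub (by simp)⟩

/-- The function `ρ` associated to a construction scheme satisfies:
`ρ(α,β) = 0` iff `α = β`; symmetry; and the triangle inequality
`α < β, α < γ → ρ(α,β) ≤ max(ρ(α,γ), ρ(β,γ))`. -/
theorem stmt6 (τ : CSType) (X : Set Ordinal) (𝓕 : Set (Finset Ordinal))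
    (hCS : IsConstructionScheme τ X 𝓕) :
    (∀ α ∈ X, ∀ β ∈ X, (csRho τ 𝓕 α β = 0 ↔ α = β)) ∧
    (∀ α β : Ordinal, csRho τ 𝓕 α β = csRho τ 𝓕 β α) ∧
    (∀ α ∈ X, ∀ β ∈ X, ∀ γ ∈ X, α < β → α < γ →
      csRho τ 𝓕 α β ≤ max (csRho τ 𝓕 α γ) (csRho τ 𝓕 β γ)) := by
  have hSne := fun {α β : Ordinal} (hα : α ∈ X) (hβ : β ∈ X) =>
    csRho_set_nonempty τ X 𝓕 hCS hα hβ
  refine ⟨?_, ?_, ?_⟩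
  · intro α hα β hβ
    constructor
    · intro h
      have hmem := Nat.sInf_mem (hSne hα hβ)
      rw [show sInf {k | ∃ F ∈ 𝓕, F.card = τ.m k ∧ α ∈ F ∧ β ∈ F} =
        csRho τ 𝓕 α β from rfl, h] at hmem
      obtain ⟨F, hF, hFc, hαF, hβF⟩ := hmem
      rw [τ.m_zero] at hFc
      obtain ⟨a, rfl⟩ := Finset.card_eq_one.mp hFc
      simp only [Finset.mem_singleton] at hαF hβF
      rw [hαF, hβF]
    · rintro rfl
      obtain ⟨G, hG, hsub⟩ := hCS.cofinal {α} (by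
        intro x hx
        simp only [Finset.coe_singleton, Set.mem_singleton_iff] at hx
        rwa [hx])
      obtain ⟨l, hl⟩ := hCS.card_mem G hG
      obtain ⟨H, hH, hHc, hαH, -⟩ :=
        descend_pt τ X 𝓕 hCS l G hG hl α (hsub (by simp)) 0 (Nat.zero_le l)
      exact Nat.le_zero.mp (Nat.sInf_le ⟨H, hH, hHc, hαH, hαH⟩)
  · intro α β
    unfold csRho
    congr 1
    ext k
    constructor <;> rintro ⟨F, hF, hc, h1, h2⟩ <;> exact ⟨F, hF, hc, h2, h1⟩
  · intro α hα β hβ γ hγ hαβ hαγ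
    set e := csRho τ 𝓕 α γ with he
    set f := csRho τ 𝓕 β γ with hf
    obtain ⟨E, hE, hEc, hαE, hγE⟩ := Nat.sInf_mem (hSne hα hγ)
    obtain ⟨F, hF, hFc, hβF, hγF⟩ := Nat.sInf_mem (hSne hβ hγ)
    obtain ⟨G, hG, hsub⟩ := hCS.cofinal (E ∪ F) (by
      intro x hx
      simp only [Finset.coe_union, Set.mem_union, Finset.mem_coe] at hx
      rcases hx with hx | hx
      · exact hCS.subset_X E hE hx
      · exact hCS.subset_X F hF hx)
    obtain ⟨l, hl⟩ := hCS.card_mem G hG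
    have hEG : E ⊆ G := (Finset.subset_union_left).trans hsub
    have hFG : F ⊆ G := (Finset.subset_union_right).trans hsub
    have hel : e ≤ l := by
      have := Finset.card_le_card hEG
      rw [hEc, hl] at this
      exact (csm_mono τ).le_iff_le.mp this
    have hfl : f ≤ l := by
      have := Finset.card_le_card hFG
      rw [hFc, hl] at this
      exact (csm_mono τ).le_iff_le.mp this
    set k := max e f with hk
    obtain ⟨E', hE', hE'c, hEE', hE'G⟩ :=
      descend_set τ X 𝓕 hCS l G hG hl e E hE hEc hEG k (le_max_left e f)
        (max_le hel hfl)
    obtain ⟨F', hF', hF'c, hFF', hF'G⟩ :=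
      descend_set τ X 𝓕 hCS l G hG hl f F hF hFc hFG k (le_max_right e f)
        (max_le hel hfl)
    have hinit := hCS.initSeg k E' hE' F' hF' hE'c hF'c
    have hαF' : α ∈ F' := by
      have hγ' : γ ∈ E' ∩ F' := Finset.mem_inter.mpr ⟨hEE' hγE, hFF' hγF⟩
      exact (Finset.mem_inter.mp (hinit.2 γ hγ' α (hEE' hαE) (le_of_lt hαγ))).2
    exact Nat.sInf_le ⟨F', hF', hF'c, hαF', hFF' hβF⟩
end

section
/- Let F be a construction scheme over a set of ordinals X with associated function ρ. For each β ∈ X, k ∈ ω, and F ∈ F of rank k with β ∈ F, the k-closure (β)_k = {α ≤ β | ρ(α,β) ≤ k} equals F ∩ (β+1). -/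
open Set

lemma key_absorb (τ : CSType) (X : Set Ordinal) (𝓕 : Set (Finset Ordinal))
    (hCS : IsConstructionScheme τ X 𝓕) :
    ∀ k j, j ≤ k → ∀ E ∈ 𝓕, ∀ F ∈ 𝓕, E.card = τ.m j → F.card = τ.m k →
    ∀ α ∈ E, ∀ β ∈ E, β ∈ F → α ≤ β → α ∈ F := by
  intro k
  induction k with
  | zero =>
    intro j hj E hE F hF hEc hFc α hα β hβE hβF hαβ
    interval_cases j
    have h := hCS.initSeg 0 E hE F hF hEc hFc
    have := h.2 β (Finset.mem_inter.mpr ⟨hβE, hβF⟩) α hα hαβ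
    exact (Finset.mem_inter.mp this).2
  | succ k ih =>
    intro j hj E hE F hF hEc hFc α hα β hβE hβF hαβ
    rcases Nat.lt_or_ge j (k + 1) with hlt | hge
    · obtain ⟨D, ⟨R, hD⟩, -⟩ := hCS.decomp k F hF hFc
      obtain ⟨i, hβi⟩ := (hD.2.1 β).mp hβF
      have hDi := hD.1 i
      have hαi := ih j (Nat.lt_succ_iff.mp hlt) E hE (D i) hDi.1 hEc hDi.2
        α hα β hβE hβi hαβ
      exact (hD.2.1 α).mpr ⟨i, hαi⟩
    · have hjk : j = k + 1 := le_antisymm hj hge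
      subst hjk
      have h := hCS.initSeg (k + 1) E hE F hF hEc hFc
      have := h.2 β (Finset.mem_inter.mpr ⟨hβE, hβF⟩) α hα hαβ
      exact (Finset.mem_inter.mp this).2

/-- For `β ∈ X`, `k ∈ ω`, and `F ∈ 𝓕` of rank `k` with `β ∈ F`,
the `k`-closure `(β)_k` equals `F ∩ (β + 1)`. -/
theorem stmt7 (τ : CSType) (X : Set Ordinal) (𝓕 : Set (Finset Ordinal))
    (hCS : IsConstructionScheme τ X 𝓕) (β : Ordinal) (hβ : β ∈ X) (k : ℕ)
    (F : Finset Ordinal) (hF : F ∈ 𝓕) (hFc : F.card = τ.m k) (hβF : β ∈ F) :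
    csClos τ 𝓕 X k β = (F : Set Ordinal) ∩ Set.Iic β := by
  ext α
  constructor
  · rintro ⟨hαX, hαβ, hρ⟩
    have hne : {j | ∃ E ∈ 𝓕, E.card = τ.m j ∧ α ∈ E ∧ β ∈ E}.Nonempty := by
      obtain ⟨E, hE, hsub⟩ := hCS.cofinal {α, β} (by
        intro x hx
        simp only [Finset.coe_insert, Finset.coe_singleton, Set.mem_insert_iff,
          Set.mem_singleton_iff] at hx
        rcases hx with rfl | rfl <;> assumption)
      obtain ⟨j, hj⟩ := hCS.card_mem E hE
      exact ⟨j, E, hE, hj, hsub (by simp), hsub (by simp)⟩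
    have hmem := Nat.sInf_mem hne
    obtain ⟨E, hE, hEc, hαE, hβE⟩ := hmem
    refine ⟨key_absorb τ X 𝓕 hCS k _ hρ E hE F hF hEc hFc α hαE β hβE hβF hαβ, hαβ⟩
  · rintro ⟨hαF, hαβ⟩
    refine ⟨hCS.subset_X F hF hαF, hαβ, Nat.sInf_le ⟨F, hF, hFc, hαF, hβF⟩⟩
end

section
/- No ordinal metric on ω₁ is an ultrametric; that is, there is no function ρ : ω₁² → ω satisfying the axioms of an ordinal metric and additionally ρ(α,β) ≤ max(ρ(α,γ), ρ(γ,β)) for all α, β, γ ∈ ω₁. -/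
open Set

/-- An ordinal metric on a set of ordinals `X`. -/
def IsOrdinalMetric (X : Set Ordinal) (ρ : Ordinal → Ordinal → ℕ) : Prop :=
  (∀ α ∈ X, ∀ β ∈ X, (ρ α β = 0 ↔ α = β)) ∧
  (∀ α ∈ X, ∀ β ∈ X, ρ α β = ρ β α) ∧
  (∀ α ∈ X, ∀ β ∈ X, ∀ γ ∈ X, α < β → α < γ → ρ α β ≤ max (ρ α γ) (ρ β γ)) ∧
  (∀ β ∈ X, ∀ k : ℕ, {α ∈ X | α ≤ β ∧ ρ α β ≤ k}.Finite)

/-!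
By the ultrametric inequality through `β`, every point of the ball `{α | ρ α 0 ≤ k}` lying below
`β` is within `max k (ρ 0 β)` of `β`, so each ball meets each initial segment `Iic β` in a
finite set. An infinite ball would contain a sequence, which is bounded below `ω₁`; hence every
ball is finite, and `ω₁`, the union of countably many of them, would be countable.
-/

namespace Ordinal

theorem not_countable_Iio_omega_one : ¬ (Iio ω₁).Countable := by
  rw [← Cardinal.le_aleph0_iff_set_countable, Cardinal.mk_Iio_ordinal, card_omega,
    Cardinal.lift_le_aleph0, not_le]
  exact Cardinal.aleph0_lt_aleph_one

theorem exists_lt_omega_one_infinite_inter_Iic {S : Set Ordinal} (hS : S ⊆ Iio ω₁)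
    (hinf : S.Infinite) : ∃ β < ω₁, (S ∩ Iic β).Infinite := by
  let f : ℕ → Ordinal := fun n ↦ hinf.natEmbedding S n
  have hfS (n : ℕ) : f n ∈ S := (hinf.natEmbedding S n).2
  refine ⟨⨆ n, f n, iSup_lt_omega_one fun n ↦ hS (hfS n), ?_⟩
  refine (infinite_range_of_injective (f := f) ?_).mono ?_
  · exact Subtype.val_injective.comp (hinf.natEmbedding S).injective
  · rintro _ ⟨n, rfl⟩
    exact ⟨hfS n, Ordinal.le_iSup f n⟩

end Ordinal

theorem finite_ball_inter_Iic_of_ultrametric {X : Set Ordinal} {ρ : Ordinal → Ordinal → ℕ}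
    (hfin : ∀ β ∈ X, ∀ k : ℕ, {α ∈ X | α ≤ β ∧ ρ α β ≤ k}.Finite)
    (hultra : ∀ α ∈ X, ∀ β ∈ X, ∀ γ ∈ X, ρ α β ≤ max (ρ α γ) (ρ γ β))
    {β γ : Ordinal} (hβ : β ∈ X) (hγ : γ ∈ X) (k : ℕ) :
    ({α ∈ X | ρ α γ ≤ k} ∩ Iic β).Finite := by
  refine (hfin β hβ (max k (ρ γ β))).subset ?_
  rintro α ⟨⟨hα, hαγ⟩, hαβ⟩
  exact ⟨hα, hαβ, (hultra α hα β hβ γ hγ).trans (max_le_max_right _ hαγ)⟩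

/-- No ordinal metric on `ω₁` is an ultrametric. -/
theorem stmt8 :
    ¬ ∃ ρ : Ordinal → Ordinal → ℕ,
      IsOrdinalMetric (Set.Iio (Ordinal.omega 1)) ρ ∧
      ∀ α ∈ (Set.Iio (Ordinal.omega 1)), ∀ β ∈ (Set.Iio (Ordinal.omega 1)), ∀ γ ∈ (Set.Iio (Ordinal.omega 1)),
        ρ α β ≤ max (ρ α γ) (ρ γ β) := by
  rintro ⟨ρ, ⟨-, -, -, hfin⟩, hultra⟩
  have h0 : (0 : Ordinal) ∈ Iio (Ordinal.omega 1) := Ordinal.omega_pos 1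
  have hball (k : ℕ) : {α ∈ Iio (Ordinal.omega 1) | ρ α 0 ≤ k}.Finite := by
    by_contra hinf
    obtain ⟨β, hβ, hinf⟩ := Ordinal.exists_lt_omega_one_infinite_inter_Iic (fun _ h ↦ h.1) hinf
    exact hinf (finite_ball_inter_Iic_of_ultrametric hfin hultra hβ h0 k)
  have hcover : Iio (Ordinal.omega 1) ⊆ ⋃ k : ℕ, {α ∈ Iio (Ordinal.omega 1) | ρ α 0 ≤ k} :=
    fun α hα ↦ mem_iUnion.2 ⟨ρ α 0, hα, le_rfl⟩
  exact Ordinal.not_countable_Iio_omega_one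
    ((countable_iUnion fun k ↦ (hball k).countable).mono hcover)
end

section
/- Let F be a construction scheme over ω₁ and ξ < α < β in ω₁. If ρ(ξ,β) < ρ(α,β), then ρ(ξ,α) < ρ(α,β). -/
open Set

/-- There is a witness of rank `csRho a b` containing `a` and `b`, provided
`a, b ∈ X`. -/
lemma csRho_witness {τ : CSType} {X : Set Ordinal} {𝓕 : Set (Finset Ordinal)}
    (hCS : IsConstructionScheme τ X 𝓕) {a b : Ordinal} (ha : a ∈ X) (hb : b ∈ X) :
    ∃ F ∈ 𝓕, F.card = τ.m (csRho τ 𝓕 a b) ∧ a ∈ F ∧ b ∈ F := by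
  have hne : {k | ∃ F ∈ 𝓕, F.card = τ.m k ∧ a ∈ F ∧ b ∈ F}.Nonempty := by
    obtain ⟨F, hF, hsub⟩ := hCS.cofinal {a, b} (by
      intro x hx
      simp only [Finset.coe_insert, Finset.coe_singleton, Set.mem_insert_iff,
        Set.mem_singleton_iff] at hx
      rcases hx with rfl | rfl <;> assumption)
    obtain ⟨k, hk⟩ := hCS.card_mem F hF
    exact ⟨k, F, hF, hk, hsub (by simp), hsub (by simp)⟩
  exact Nat.sInf_mem hne

/-- Descending through canonical decompositions: any element of rank `k + d`
containing `b` contains a sub-element of rank `k` containing `b`. -/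
lemma csDescend {τ : CSType} {X : Set Ordinal} {𝓕 : Set (Finset Ordinal)}
    (hCS : IsConstructionScheme τ X 𝓕) {b : Ordinal} :
    ∀ d k : ℕ, ∀ E ∈ 𝓕, E.card = τ.m (k + d) → b ∈ E →
      ∃ E' ∈ 𝓕, E'.card = τ.m k ∧ b ∈ E' ∧ E' ⊆ E := by
  intro d
  induction d with
  | zero => intro k E hE hcard hb; exact ⟨E, hE, hcard, hb, subset_rfl⟩
  | succ d ih =>
    intro k E hE hcard hb
    have hcard' : E.card = τ.m ((k + d) + 1) := by
      rw [hcard]; ring_nf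
    obtain ⟨D, ⟨R, hCD⟩, -⟩ := hCS.decomp (k + d) E hE hcard'
    obtain ⟨hD, hmem, -, -, -, -⟩ := hCD
    obtain ⟨i, hbi⟩ := (hmem b).mp hb
    have hsub : D i ⊆ E := fun x hx => (hmem x).mpr ⟨i, hx⟩
    obtain ⟨E', hE', hc', hb', hsub'⟩ := ih k (D i) (hD i).1 (hD i).2 hbi
    exact ⟨E', hE', hc', hb', hsub'.trans hsub⟩

/-- For a construction scheme over `ω₁` and `ξ < α < β < ω₁`:
if `ρ(ξ,β) < ρ(α,β)` then `ρ(ξ,α) < ρ(α,β)`. -/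
theorem stmt14 (τ : CSType) (𝓕 : Set (Finset Ordinal))
    (hCS : IsConstructionScheme τ (Set.Iio (Ordinal.omega 1)) 𝓕)
    (ξ α β : Ordinal) (hβ : β ∈ (Set.Iio (Ordinal.omega 1))) (h1 : ξ < α) (h2 : α < β)
    (h : csRho τ 𝓕 ξ β < csRho τ 𝓕 α β) :
    csRho τ 𝓕 ξ α < csRho τ 𝓕 α β := by
  set K := csRho τ 𝓕 α β with hK
  set k := csRho τ 𝓕 ξ β with hk
  have hξX : ξ ∈ Set.Iio (Ordinal.omega 1) := lt_trans (lt_trans h1 h2) hβ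
  have hαX : α ∈ Set.Iio (Ordinal.omega 1) := lt_trans h2 hβ
  -- minimality of K
  have hmin : ∀ j : ℕ, ∀ E ∈ 𝓕, E.card = τ.m j → α ∈ E → β ∈ E → K ≤ j := by
    intro j E hE hc hα hβ'
    exact Nat.sInf_le ⟨E, hE, hc, hα, hβ'⟩
  -- witnesses
  obtain ⟨F, hF, hFcard, hξF, hβF⟩ := csRho_witness hCS hξX hβ
  obtain ⟨G, hG, hGcard, hαG, hβG⟩ := csRho_witness hCS hαX hβ
  have hK1 : 1 ≤ K := Nat.one_le_iff_ne_zero.mpr (by omega)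
  have hGcard' : G.card = τ.m ((K - 1) + 1) := by
    rw [hGcard]; congr 1; omega
  obtain ⟨D, ⟨R, hCD⟩, -⟩ := hCS.decomp (K - 1) G hG hGcard'
  obtain ⟨hD, hmem, -, hroot, -, horder⟩ := hCD
  obtain ⟨i, hαi⟩ := (hmem α).mp hαG
  obtain ⟨j, hβj⟩ := (hmem β).mp hβG
  have hij : i ≠ j := by
    rintro rfl
    have := hmin (K - 1) (D i) (hD i).1 (hD i).2 hαi hβj
    omega
  have hαR : α ∉ R := by
    intro hαR
    have : α ∈ D j := by
      rw [← hroot i j hij] at hαR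
      exact (Finset.mem_inter.mp hαR).2
    have := hmin (K - 1) (D j) (hD j).1 (hD j).2 this hβj
    omega
  have hβR : β ∉ R := by
    intro hβR
    have : β ∈ D i := by
      rw [← hroot i j hij] at hβR
      exact (Finset.mem_inter.mp hβR).1
    have := hmin (K - 1) (D i) (hD i).1 (hD i).2 hαi this
    omega
  have hilt : i < j := by
    rcases hij.lt_or_gt with hlt | hgt
    · exact hlt
    · exact absurd (horder j i hgt β hβj hβR α hαi hαR) (not_lt.mpr h2.le)
  -- descend from D j down to rank k, find ξ there via initial segments
  have hkK1 : k ≤ K - 1 := by omega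
  obtain ⟨E', hE', hE'card, hβE', hE'sub⟩ :=
    csDescend hCS ((K - 1) - k) k (D j) (hD j).1 (by
      rw [(hD j).2]; congr 1; omega) hβj
  have hξE' : ξ ∈ E' := by
    obtain ⟨-, hinit⟩ := hCS.initSeg k F hF E' hE' hFcard hE'card
    have hβFE' : β ∈ F ∩ E' := Finset.mem_inter.mpr ⟨hβF, hβE'⟩
    have := hinit β hβFE' ξ hξF (le_of_lt (lt_trans h1 h2))
    exact (Finset.mem_inter.mp this).2
  have hξj : ξ ∈ D j := hE'sub hξE'
  have hξR : ξ ∈ R := by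
    by_contra hξR
    exact absurd (horder i j hilt α hαi hαR ξ hξj hξR) (not_lt.mpr h1.le)
  have hξi : ξ ∈ D i := by
    rw [← hroot i j hij] at hξR
    exact (Finset.mem_inter.mp hξR).1
  have : csRho τ 𝓕 ξ α ≤ K - 1 :=
    Nat.sInf_le ⟨D i, (hD i).1, (hD i).2, hξi, hαi⟩
  omega
end
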